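/- arXiv:2208.02120 — 2 statements merged into one kernel-verified Lean document; each statement's English description precedes it below -/
import Mathlib

section
/- In the braid group Br_{n+1}, for j ≥ i+2, the identity (s_j ··· s_i² ··· s_j)(s_{j-1} ··· s_i² ··· s_{j-1}) = (s_j ··· s_{i+1})² s_i s_{i+1} (s_{i+1}s_i)(s_{i+2}s_{i+1}) ··· (s_{j-1}s_{j-2})(s_j s_{j-1}) holds, where s_j ··· s_i² ··· s_j denotes s_j s_{j-1} ··· s_{i+1} s_i s_i s_{i+1} ··· s_{j-1} s_j. -/
namespace BraidPaper

/-- The braid relations on `n` generators `s_1, ..., s_n` (indexed by `Fin n`):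
far-away commutativity and the braid relation for adjacent generators.  The
corresponding presented group is the Artin braid group `Br_{n+1}`. -/
def braidRelsSet (n : ℕ) : Set (FreeGroup (Fin n)) :=
  {r | (∃ i j : Fin n, (i : ℕ) + 2 ≤ (j : ℕ) ∧
        r = FreeGroup.of i * FreeGroup.of j * (FreeGroup.of i)⁻¹ * (FreeGroup.of j)⁻¹) ∨
       (∃ i j : Fin n, (i : ℕ) + 1 = (j : ℕ) ∧
        r = FreeGroup.of i * FreeGroup.of j * FreeGroup.of i *
            (FreeGroup.of j)⁻¹ * (FreeGroup.of i)⁻¹ * (FreeGroup.of j)⁻¹)}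

/-- The Artin braid group `Br_{n+1}` on generators `s_1, ..., s_n`. -/
abbrev BraidGroup (n : ℕ) := PresentedGroup (braidRelsSet n)

/-- The generator `s_i` of `Br_{n+1}`, for `1 ≤ i ≤ n` (junk value `1` otherwise). -/
def gen (n : ℕ) (i : ℕ) : BraidGroup n :=
  if h : 1 ≤ i ∧ i ≤ n then PresentedGroup.of (⟨i - 1, by omega⟩ : Fin n) else 1

/-- The descending product `s_j s_{j-1} ⋯ s_i` (equal to `1` if `j < i`). -/
def desc (n j i : ℕ) : BraidGroup n :=
  (((List.range' i (j + 1 - i)).reverse).map (gen n)).prod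

/-- The ascending product `s_i s_{i+1} ⋯ s_j` (equal to `1` if `j < i`). -/
def asc (n i j : ℕ) : BraidGroup n :=
  ((List.range' i (j + 1 - i)).map (gen n)).prod

/-- The standard lift `ℓ_{i,j} = (s_i)(s_{i+1}s_i)⋯(s_j⋯s_i)` of the longest element
over the interval `[i,j]`, with the convention `ℓ_{i,j} = 1` when `j < i`. -/
def ell (n i j : ℕ) : BraidGroup n :=
  ((List.range' i (j + 1 - i)).map (fun k => desc n k i)).prod

lemma rel_one {n : ℕ} {r : FreeGroup (Fin n)} (hr : r ∈ braidRelsSet n) :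
    (QuotientGroup.mk r : BraidGroup n) = 1 :=
  (QuotientGroup.eq_one_iff r).mpr (Subgroup.subset_normalClosure hr)

lemma gen_def (n a : ℕ) (ha : 1 ≤ a) (hn : a ≤ n) :
    gen n a = PresentedGroup.of (⟨a - 1, by omega⟩ : Fin n) := by
  rw [gen, dif_pos ⟨ha, hn⟩]

lemma gen_comm {n a b : ℕ} (ha : 1 ≤ a) (hab : a + 2 ≤ b) (hb : b ≤ n) :
    Commute (gen n a) (gen n b) := by
  have hx : a - 1 < n := by omega
  have hy : b - 1 < n := by omega
  set x : Fin n := ⟨a - 1, hx⟩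
  set y : Fin n := ⟨b - 1, hy⟩
  have h : (QuotientGroup.mk (FreeGroup.of x * FreeGroup.of y * (FreeGroup.of x)⁻¹ *
      (FreeGroup.of y)⁻¹) : BraidGroup n) = 1 :=
    rel_one (Or.inl ⟨x, y, by show a - 1 + 2 ≤ b - 1; omega, rfl⟩)
  have h' : (PresentedGroup.of x : BraidGroup n) * PresentedGroup.of y *
      (PresentedGroup.of x)⁻¹ * (PresentedGroup.of y)⁻¹ = 1 := h
  rw [gen_def n a ha (by omega), gen_def n b (by omega) hb]
  rw [commute_iff_eq, ← mul_inv_eq_one]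
  rw [← h']; simp only [x, y]; group

lemma gen_braid (n a : ℕ) (ha : 1 ≤ a) (han : a + 1 ≤ n) :
    gen n a * gen n (a + 1) * gen n a = gen n (a + 1) * gen n a * gen n (a + 1) := by
  have hx : a - 1 < n := by omega
  have hy : a + 1 - 1 < n := by omega
  set x : Fin n := ⟨a - 1, hx⟩
  set y : Fin n := ⟨a + 1 - 1, hy⟩
  have h : (QuotientGroup.mk (FreeGroup.of x * FreeGroup.of y * FreeGroup.of x *
      (FreeGroup.of y)⁻¹ * (FreeGroup.of x)⁻¹ * (FreeGroup.of y)⁻¹) : BraidGroup n) = 1 :=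
    rel_one (Or.inr ⟨x, y, by show a - 1 + 1 = a + 1 - 1; omega, rfl⟩)
  have h' : (PresentedGroup.of x : BraidGroup n) * PresentedGroup.of y * PresentedGroup.of x *
      (PresentedGroup.of y)⁻¹ * (PresentedGroup.of x)⁻¹ * (PresentedGroup.of y)⁻¹ = 1 := h
  rw [gen_def n a ha (by omega), gen_def n (a+1) (by omega) han]
  rw [← mul_inv_eq_one, ← h']; simp only [x, y]; group

lemma gen_junk (n k : ℕ) (h : ¬ (1 ≤ k ∧ k ≤ n)) : gen n k = 1 := by
  rw [gen, dif_neg h]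

lemma asc_nil (n i j : ℕ) (h : j < i) : asc n i j = 1 := by
  unfold asc; rw [show j + 1 - i = 0 by omega]; simp

lemma desc_nil (n j i : ℕ) (h : j < i) : desc n j i = 1 := by
  unfold desc; rw [show j + 1 - i = 0 by omega]; simp

lemma asc_head (n i j : ℕ) (h : i ≤ j) : asc n i j = gen n i * asc n (i + 1) j := by
  unfold asc
  rw [show j + 1 - i = (j + 1 - (i + 1)) + 1 by omega, List.range'_succ]
  simp

lemma asc_last (n i j : ℕ) (hi : 1 ≤ i) (h : i ≤ j) : asc n i j = asc n i (j - 1) * gen n j := by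
  unfold asc
  rw [show j + 1 - i = (j - i) + 1 by omega, List.range'_1_concat,
    show i + (j - i) = j by omega, show j - 1 + 1 - i = j - i by omega]
  simp

lemma desc_succ (n j i : ℕ) (h : i ≤ j + 1) : desc n (j + 1) i = gen n (j + 1) * desc n j i := by
  unfold desc
  rw [show j + 1 + 1 - i = (j + 1 - i) + 1 by omega, List.range'_1_concat,
    show i + (j + 1 - i) = j + 1 by omega]
  simp

lemma desc_last (n j i : ℕ) (h : i ≤ j) : desc n j i = desc n j (i + 1) * gen n i := by
  unfold desc
  rw [show j + 1 - i = (j + 1 - (i + 1)) + 1 by omega, List.range'_succ]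
  simp

lemma asc_single (n i : ℕ) : asc n i i = gen n i := by
  unfold asc
  rw [show i + 1 - i = 1 by omega]
  simp [List.range']

lemma asc_append (n i m j : ℕ) (him : i ≤ m + 1) (hmj : m ≤ j) :
    asc n i j = asc n i m * asc n (m + 1) j := by
  unfold asc
  rw [← List.prod_append, ← List.map_append]
  congr 1
  rw [show j + 1 - i = (m + 1 - i) + (j + 1 - (m + 1)) by omega, ← List.range'_append_1,
    show i + (m + 1 - i) = m + 1 by omega]

lemma commute_gen_asc (n b i j : ℕ) (hi : 1 ≤ i) (hb : 1 ≤ b) (hbn : b ≤ n)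
    (h : j + 2 ≤ b ∨ b + 2 ≤ i) : Commute (gen n b) (asc n i j) := by
  apply Commute.list_prod_right
  intro x hx
  simp only [List.mem_map] at hx
  obtain ⟨k, hk, rfl⟩ := hx
  rw [List.mem_range'] at hk
  obtain ⟨l, hl, rfl⟩ := hk
  have hik : i ≤ i + 1 * l ∧ i + 1 * l ≤ j := by omega
  rcases h with h | h
  · exact (gen_comm (by omega) (by omega) hbn).symm
  · by_cases hkn : i + 1 * l ≤ n
    · exact gen_comm hb (by omega) hkn
    · rw [gen_junk n (i + 1 * l) (by omega)]; exact Commute.one_right _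

lemma commute_gen_desc (n b i j : ℕ) (hi : 1 ≤ i) (hb : 1 ≤ b) (hbn : b ≤ n)
    (h : j + 2 ≤ b ∨ b + 2 ≤ i) : Commute (gen n b) (desc n j i) := by
  apply Commute.list_prod_right
  intro x hx
  simp only [List.mem_map, List.mem_reverse] at hx
  obtain ⟨k, hk, rfl⟩ := hx
  rw [List.mem_range'] at hk
  obtain ⟨l, hl, rfl⟩ := hk
  have hik : i ≤ i + 1 * l ∧ i + 1 * l ≤ j := by omega
  rcases h with h | h
  · exact (gen_comm (by omega) (by omega) hbn).symm
  · by_cases hkn : i + 1 * l ≤ n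
    · exact gen_comm hb (by omega) hkn
    · rw [gen_junk n (i + 1 * l) (by omega)]; exact Commute.one_right _

lemma asc_shift (n i j k : ℕ) (hi : 1 ≤ i) (hik : i ≤ k) (hkj : k + 1 ≤ j) (hj : j ≤ n) :
    asc n i j * gen n k = gen n (k + 1) * asc n i j := by
  have h1 : asc n i j = asc n i (k + 1) * asc n (k + 2) j := by
    have := asc_append n i (k + 1) j (by omega) (by omega)
    rwa [show k + 1 + 1 = k + 2 by rfl] at this
  have h2 : asc n i (k + 1) = asc n i (k - 1) * (gen n k * gen n (k + 1)) := by
    have h3 := asc_append n i (k - 1) (k + 1) (by omega) (by omega)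
    rw [show k - 1 + 1 = k by omega] at h3
    rw [h3, asc_head n k (k + 1) (by omega), asc_single]
  have hc1 : gen n k * asc n (k + 2) j = asc n (k + 2) j * gen n k :=
    (commute_gen_asc n k (k + 2) j (by omega) (by omega) (by omega) (Or.inr (by omega))).eq
  have hc2 : gen n (k + 1) * asc n i (k - 1) = asc n i (k - 1) * gen n (k + 1) :=
    (commute_gen_asc n (k + 1) i (k - 1) hi (by omega) (by omega) (Or.inl (by omega))).eq
  have hbr := gen_braid n k (by omega) (by omega)
  calc asc n i j * gen n k
      = asc n i (k - 1) * (gen n k * gen n (k + 1) * (asc n (k + 2) j * gen n k)) := by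
        rw [h1, h2]; group
    _ = asc n i (k - 1) * (gen n k * gen n (k + 1) * gen n k * asc n (k + 2) j) := by
        rw [← hc1]; group
    _ = asc n i (k - 1) * (gen n (k + 1) * gen n k * gen n (k + 1) * asc n (k + 2) j) := by
        rw [hbr]
    _ = asc n i (k - 1) * gen n (k + 1) * (gen n k * gen n (k + 1) * asc n (k + 2) j) := by
        group
    _ = gen n (k + 1) * (asc n i (k - 1) * (gen n k * gen n (k + 1)) * asc n (k + 2) j) := by
        rw [← hc2]; group
    _ = gen n (k + 1) * asc n i j := by rw [h1, h2]

lemma asc_mul_desc (n i j m : ℕ) (hi : 1 ≤ i) (hm : m + 1 ≤ j) (hj : j ≤ n) :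
    asc n i j * desc n m i = desc n (m + 1) (i + 1) * asc n i j := by
  induction m with
  | zero =>
    rw [desc_nil n 0 i (by omega), desc_nil n 1 (i + 1) (by omega)]
    simp
  | succ m ih =>
    by_cases h : i ≤ m + 1
    · rw [desc_succ n m i h, ← mul_assoc,
        asc_shift n i j (m + 1) hi h (by omega) hj, mul_assoc, ih (by omega),
        ← mul_assoc, ← desc_succ n (m + 1) (i + 1) (by omega)]
    · rw [desc_nil n (m + 1) i (by omega), desc_nil n (m + 2) (i + 1) (by omega)]
      simp

lemma asc_asc (n i d : ℕ) (hi : 1 ≤ i) (hn : i + d ≤ n) :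
    asc n (i + 1) (i + d) * asc n i (i + d - 1) =
      ((List.range' i d).map (fun m => gen n (m + 1) * gen n m)).prod := by
  induction d with
  | zero =>
    rw [asc_nil n (i + 1) (i + 0) (by omega), asc_nil n i (i + 0 - 1) (by omega)]
    simp
  | succ d ih =>
    have h1 : asc n (i + 1) (i + (d + 1)) = asc n (i + 1) (i + d) * gen n (i + d + 1) := by
      have := asc_last n (i + 1) (i + (d + 1)) (by omega) (by omega)
      rwa [show i + (d + 1) - 1 = i + d by omega, show i + (d + 1) = i + d + 1 by omega] at this
    have h2 : asc n i (i + (d + 1) - 1) = asc n i (i + d - 1) * gen n (i + d) := by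
      have := asc_last n i (i + (d + 1) - 1) hi (by omega)
      rwa [show i + (d + 1) - 1 - 1 = i + d - 1 by omega,
        show i + (d + 1) - 1 = i + d by omega] at this
    have hc : gen n (i + d + 1) * asc n i (i + d - 1) = asc n i (i + d - 1) * gen n (i + d + 1) :=
      (commute_gen_asc n (i + d + 1) i (i + d - 1) hi (by omega) (by omega)
        (Or.inl (by omega))).eq
    rw [List.range'_1_concat, List.map_append, List.prod_append, ← ih (by omega)]
    rw [h1, h2]
    calc asc n (i + 1) (i + d) * gen n (i + d + 1) * (asc n i (i + d - 1) * gen n (i + d))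
        = asc n (i + 1) (i + d) * (gen n (i + d + 1) * asc n i (i + d - 1)) * gen n (i + d) := by
          group
      _ = asc n (i + 1) (i + d) * (asc n i (i + d - 1) * gen n (i + d + 1)) * gen n (i + d) := by
          rw [hc]
      _ = asc n (i + 1) (i + d) * asc n i (i + d - 1) *
            List.prod [gen n (i + d + 1) * gen n (i + d)] := by
          simp; group

/-- `(s_j ⋯ s_i² ⋯ s_j)(s_{j-1} ⋯ s_i² ⋯ s_{j-1})
  = (s_j ⋯ s_{i+1})² s_i s_{i+1} (s_{i+1}s_i)(s_{i+2}s_{i+1}) ⋯ (s_j s_{j-1})` for `j ≥ i+2`. -/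
theorem palindrome_product_identity (n i j : ℕ) (hi : 1 ≤ i) (hij : i + 2 ≤ j) (hj : j ≤ n) :
    (desc n j i * asc n i j) * (desc n (j - 1) i * asc n i (j - 1)) =
      (desc n j (i + 1)) ^ 2 * gen n i * gen n (i + 1) *
        ((List.range' i (j - i)).map (fun m => gen n (m + 1) * gen n m)).prod := by
  have hii : i ≤ j := by omega
  have h1 : desc n j i = desc n j (i + 1) * gen n i := desc_last n j i hii
  have h2 : asc n i j * desc n (j - 1) i = desc n j (i + 1) * asc n i j := by
    have := asc_mul_desc n i j (j - 1) hi (by omega) hj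
    rwa [show j - 1 + 1 = j by omega] at this
  have h3 : desc n j (i + 1) = desc n j (i + 2) * gen n (i + 1) := by
    have := desc_last n j (i + 1) (by omega)
    rwa [show i + 1 + 1 = i + 2 by rfl] at this
  have h4 : Commute (gen n i) (desc n j (i + 2)) :=
    commute_gen_desc n i (i + 2) j (by omega) hi (by omega) (Or.inr (by omega))
  have hAD : gen n i * desc n j (i + 1) = desc n j (i + 2) * (gen n i * gen n (i + 1)) := by
    rw [h3, ← mul_assoc, h4.eq, mul_assoc]
  have h5 : asc n i j = gen n i * asc n (i + 1) j := asc_head n i j hii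
  have h6 := gen_braid n i hi (by omega)
  have h7 : asc n (i + 1) j * asc n i (j - 1) =
      ((List.range' i (j - i)).map (fun m => gen n (m + 1) * gen n m)).prod := by
    have := asc_asc n i (j - i) hi (by omega)
    rwa [show i + (j - i) = j by omega] at this
  calc (desc n j i * asc n i j) * (desc n (j - 1) i * asc n i (j - 1))
      = desc n j i * (asc n i j * desc n (j - 1) i) * asc n i (j - 1) := by group
    _ = (desc n j (i + 1) * gen n i) * (desc n j (i + 1) * asc n i j) * asc n i (j - 1) := by
        rw [h2, ← h1]
    _ = desc n j (i + 1) * (gen n i * desc n j (i + 1)) * (asc n i j * asc n i (j - 1)) := by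
        group
    _ = desc n j (i + 1) * (desc n j (i + 2) * (gen n i * gen n (i + 1))) *
          ((gen n i * asc n (i + 1) j) * asc n i (j - 1)) := by rw [hAD, ← h5]
    _ = (desc n j (i + 1) * desc n j (i + 2)) * (gen n i * gen n (i + 1) * gen n i) *
          (asc n (i + 1) j * asc n i (j - 1)) := by group
    _ = (desc n j (i + 1) * desc n j (i + 2)) * (gen n (i + 1) * gen n i * gen n (i + 1)) *
          ((List.range' i (j - i)).map (fun m => gen n (m + 1) * gen n m)).prod := by
        rw [h6, h7]
    _ = (desc n j (i + 1) * (desc n j (i + 2) * gen n (i + 1))) * (gen n i * (gen n (i + 1) *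
          ((List.range' i (j - i)).map (fun m => gen n (m + 1) * gen n m)).prod)) := by group
    _ = (desc n j (i + 1)) ^ 2 * gen n i * gen n (i + 1) *
          ((List.range' i (j - i)).map (fun m => gen n (m + 1) * gen n m)).prod := by
        rw [← h3, sq]; group
end BraidPaper
end

section
/- In the braid group Br_{n+1}, the pure braid generator A_{i,j} := σ_{i,j}² with σ_{i,j} = (s_{j-1} ··· s_{i+1}) s_i (s_{i+1}⁻¹ ··· s_{j-1}⁻¹) satisfies A_{i,j} = ℓ_{i,j-2}⁻² · ℓ_{i,j-1}² · ℓ_{i+1,j-2}² · ℓ_{i+1,j-1}⁻² for all 1 ≤ i < j ≤ n+1, with the convention ℓ_{a,b} = 1 when b < a. -/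
namespace BraidPaper

lemma rel_eq_one {n : ℕ} {r : FreeGroup (Fin n)} (h : r ∈ braidRelsSet n) :
    (QuotientGroup.mk r : BraidGroup n) = 1 :=
  (QuotientGroup.eq_one_iff r).mpr (Subgroup.subset_normalClosure h)

lemma gen_eq_one {n k : ℕ} (h : k = 0 ∨ n < k) : gen n k = 1 := by
  unfold gen; rw [dif_neg]; omega

lemma gen_comm_s12 {n k l : ℕ} (h : k + 2 ≤ l) : Commute (gen n k) (gen n l) := by
  by_cases hk : 1 ≤ k ∧ l ≤ n
  · obtain ⟨hk1, hln⟩ := hk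
    have hkn : k ≤ n := by omega
    have hl1 : 1 ≤ l := by omega
    unfold gen
    rw [dif_pos ⟨hk1, hkn⟩, dif_pos ⟨hl1, hln⟩]
    set a : Fin n := ⟨k - 1, by omega⟩
    set b : Fin n := ⟨l - 1, by omega⟩
    have hr : (FreeGroup.of a * FreeGroup.of b * (FreeGroup.of a)⁻¹ * (FreeGroup.of b)⁻¹)
        ∈ braidRelsSet n := Or.inl ⟨a, b, by simp only [a, b]; omega, rfl⟩
    have h1 := rel_eq_one hr
    have : (PresentedGroup.of a * PresentedGroup.of b * (PresentedGroup.of a)⁻¹ *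
        (PresentedGroup.of b)⁻¹ : BraidGroup n) = 1 := h1
    exact commutatorElement_eq_one_iff_commute.mp this
  · push_neg at hk
    rcases Nat.lt_or_ge n l with h' | h'
    · rw [gen_eq_one (Or.inr h')]; exact Commute.one_right _
    · rw [gen_eq_one (n := n) (k := k) (Or.inl (by omega))]; exact Commute.one_left _

lemma gen_braid_s12 {n k : ℕ} (h1 : 1 ≤ k) (h2 : k + 1 ≤ n) :
    gen n k * gen n (k+1) * gen n k = gen n (k+1) * gen n k * gen n (k+1) := by
  unfold gen
  rw [dif_pos ⟨h1, by omega⟩, dif_pos ⟨by omega, h2⟩]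
  set a : Fin n := ⟨k - 1, by omega⟩
  set b : Fin n := ⟨k + 1 - 1, by omega⟩
  have hr : (FreeGroup.of a * FreeGroup.of b * FreeGroup.of a *
      (FreeGroup.of b)⁻¹ * (FreeGroup.of a)⁻¹ * (FreeGroup.of b)⁻¹) ∈ braidRelsSet n :=
    Or.inr ⟨a, b, by simp only [a, b]; omega, rfl⟩
  have h3 : (PresentedGroup.of a * PresentedGroup.of b * PresentedGroup.of a *
      (PresentedGroup.of b)⁻¹ * (PresentedGroup.of a)⁻¹ * (PresentedGroup.of b)⁻¹ :
      BraidGroup n) = 1 := rel_eq_one hr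
  rw [mul_inv_eq_one, mul_inv_eq_iff_eq_mul, mul_inv_eq_iff_eq_mul] at h3
  exact h3

lemma desc_of_lt {n j i : ℕ} (h : j < i) : desc n j i = 1 := by
  unfold desc; rw [show j + 1 - i = 0 by omega]; simp
lemma asc_of_lt {n j i : ℕ} (h : j < i) : asc n i j = 1 := by
  unfold asc; rw [show j + 1 - i = 0 by omega]; simp
lemma ell_of_lt {n j i : ℕ} (h : j < i) : ell n i j = 1 := by
  unfold ell; rw [show j + 1 - i = 0 by omega]; simp

lemma desc_peel_top {n j i : ℕ} (h : i ≤ j + 1) : desc n (j+1) i = gen n (j+1) * desc n j i := by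
  unfold desc
  rw [show j + 1 + 1 - i = (j + 1 - i) + 1 by omega, List.range'_concat,
    show i + 1 * (j + 1 - i) = j + 1 by omega]
  simp
lemma desc_peel_bot {n j i : ℕ} (h : i ≤ j) : desc n j i = desc n j (i+1) * gen n i := by
  unfold desc
  rw [show j + 1 - i = (j + 1 - (i+1)) + 1 by omega, List.range'_succ]
  simp
lemma asc_peel_bot {n j i : ℕ} (h : i ≤ j) : asc n i j = gen n i * asc n (i+1) j := by
  unfold asc
  rw [show j + 1 - i = (j + 1 - (i+1)) + 1 by omega, List.range'_succ]
  simp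
lemma asc_peel_top {n j i : ℕ} (h : i ≤ j + 1) : asc n i (j+1) = asc n i j * gen n (j+1) := by
  unfold asc
  rw [show j + 1 + 1 - i = (j + 1 - i) + 1 by omega, List.range'_concat,
    show i + 1 * (j + 1 - i) = j + 1 by omega]
  simp
lemma ell_peel_top {n j i : ℕ} (h : i ≤ j + 1) : ell n i (j+1) = ell n i j * desc n (j+1) i := by
  unfold ell
  rw [show j + 1 + 1 - i = (j + 1 - i) + 1 by omega, List.range'_concat,
    show i + 1 * (j + 1 - i) = j + 1 by omega]
  simp

lemma commute_desc {n c d : ℕ} {x : BraidGroup n}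
    (h : ∀ m, d ≤ m → m ≤ c → Commute x (gen n m)) : Commute x (desc n c d) := by
  apply Commute.list_prod_right
  intro y hy
  simp only [List.mem_map, List.mem_reverse, List.mem_range'] at hy
  obtain ⟨m, ⟨t, ht, rfl⟩, rfl⟩ := hy
  exact h _ (by omega) (by omega)

lemma commute_asc {n c d : ℕ} {x : BraidGroup n}
    (h : ∀ m, d ≤ m → m ≤ c → Commute x (gen n m)) : Commute x (asc n d c) := by
  apply Commute.list_prod_right
  intro y hy
  simp only [List.mem_map, List.mem_range'] at hy
  obtain ⟨m, ⟨t, ht, rfl⟩, rfl⟩ := hy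
  exact h _ (by omega) (by omega)

lemma commute_ell {n a b : ℕ} {x : BraidGroup n}
    (h : ∀ m, a ≤ m → m ≤ b → Commute x (gen n m)) : Commute x (ell n a b) := by
  apply Commute.list_prod_right
  intro y hy
  simp only [List.mem_map, List.mem_range'] at hy
  obtain ⟨m, ⟨t, ht, rfl⟩, rfl⟩ := hy
  exact commute_desc (fun m' h1 h2 => h m' (by omega) (by omega))

lemma desc_mul_gen (n a : ℕ) (ha : 1 ≤ a) : ∀ b k, a ≤ k → k + 1 ≤ b → b ≤ n →
    desc n b a * gen n (k+1) = gen n k * desc n b a := by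
  intro b
  induction b with
  | zero => intro k _ h _; omega
  | succ c ih =>
    intro k hak hkb hbn
    by_cases hk : k = c
    · subst hk
      obtain ⟨m, rfl⟩ : ∃ m, k = m + 1 := ⟨k - 1, by omega⟩
      have hcd : Commute (gen n (m+2)) (desc n m a) :=
        commute_desc (fun t _ h2 => (gen_comm_s12 (show t + 2 ≤ m + 2 by omega)).symm)
      have hbr := gen_braid_s12 (n := n) (k := m+1) (by omega) (by omega)
      calc desc n (m+1+1) a * gen n (m+1+1)
          = gen n (m+2) * (gen n (m+1) * desc n m a) * gen n (m+2) := by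
            rw [desc_peel_top (by omega), desc_peel_top (by omega)]
        _ = gen n (m+2) * gen n (m+1) * gen n (m+2) * desc n m a := by
            rw [mul_assoc (gen n (m+2)), mul_assoc (gen n (m+1)), hcd.symm.eq]; group
        _ = gen n (m+1) * (gen n (m+2) * (gen n (m+1) * desc n m a)) := by
            rw [show m + 2 = (m+1) + 1 from rfl, ← hbr]; group
        _ = gen n (m+1) * desc n (m+1+1) a := by
            rw [desc_peel_top (by omega), desc_peel_top (by omega)]
    · rw [desc_peel_top (by omega), mul_assoc, ih k hak (by omega) (by omega),
        ← mul_assoc, ← mul_assoc, (gen_comm_s12 (show k + 2 ≤ c + 1 by omega)).eq]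

lemma asc_mul_gen (n a : ℕ) (ha : 1 ≤ a) : ∀ b k, a ≤ k → k + 1 ≤ b → b ≤ n →
    asc n a b * gen n k = gen n (k+1) * asc n a b := by
  intro b
  induction b with
  | zero => intro k _ h _; omega
  | succ c ih =>
    intro k hak hkb hbn
    by_cases hk : k = c
    · subst hk
      obtain ⟨m, rfl⟩ : ∃ m, k = m + 1 := ⟨k - 1, by omega⟩
      have hca : Commute (gen n (m+2)) (asc n a m) :=
        commute_asc (fun t _ h2 => (gen_comm_s12 (show t + 2 ≤ m + 2 by omega)).symm)
      have hbr := gen_braid_s12 (n := n) (k := m+1) (by omega) (by omega)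
      calc asc n a (m+1+1) * gen n (m+1)
          = asc n a m * (gen n (m+1) * gen n (m+2) * gen n (m+1)) := by
            rw [asc_peel_top (by omega), asc_peel_top (by omega)]; group
        _ = asc n a m * (gen n (m+2) * gen n (m+1) * gen n (m+2)) := by rw [hbr]
        _ = gen n (m+2) * (asc n a m * gen n (m+1) * gen n (m+2)) := by
            rw [← mul_assoc, ← mul_assoc, hca.symm.eq]; group
        _ = gen n (m+1+1) * asc n a (m+1+1) := by
            rw [asc_peel_top (by omega), asc_peel_top (by omega)]
    · rw [asc_peel_top (by omega), mul_assoc,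
        ← (gen_comm_s12 (show k + 2 ≤ c + 1 by omega)).eq, ← mul_assoc,
        ih k hak (by omega) (by omega)]
      group

lemma desc_self (n a : ℕ) : desc n a a = gen n a := by
  unfold desc
  rw [show a + 1 - a = 1 by omega]
  simp [List.range'_succ]

lemma asc_self (n a : ℕ) : asc n a a = gen n a := by
  unfold asc
  rw [show a + 1 - a = 1 by omega]
  simp [List.range'_succ]

lemma ell_self (n a : ℕ) : ell n a a = gen n a := by
  unfold ell
  rw [show a + 1 - a = 1 by omega]
  simp [List.range'_succ, desc_self]

/-- The band `τ_{a,b} = (s_b ⋯ s_a)(s_a ⋯ s_b)` commutes with `s_k` for `a ≤ k ≤ b-1`. -/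
lemma tau_comm {n a b k : ℕ} (ha : 1 ≤ a) (hbn : b ≤ n) (hak : a ≤ k) (hkb : k + 1 ≤ b) :
    Commute (desc n b a * asc n a b) (gen n k) := by
  rw [Commute, SemiconjBy, mul_assoc, asc_mul_gen n a ha b k hak hkb hbn,
    ← mul_assoc, desc_mul_gen n a ha b k hak hkb hbn, mul_assoc]

/-- `ℓ_{a,b} = (s_a ⋯ s_b) ℓ_{a,b-1}`. -/
lemma ell_eq_asc_mul (n a : ℕ) (ha : 1 ≤ a) :
    ∀ b, b + 1 ≤ n → ell n a (b+1) = asc n a (b+1) * ell n a b := by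
  intro b
  induction b with
  | zero =>
    intro _
    rcases Nat.lt_or_ge 1 a with h' | h'
    · rw [ell_of_lt h', asc_of_lt h', ell_of_lt (by omega), one_mul]
    · have : a = 1 := by omega
      subst this
      rw [ell_self, asc_self, ell_of_lt (by omega), mul_one]
  | succ c ih =>
    intro hn
    rcases Nat.lt_or_ge (c + 2) a with h' | h'
    · rw [ell_of_lt h', asc_of_lt h', ell_of_lt (by omega), one_mul]
    rcases Nat.eq_or_lt_of_le h' with h'' | h''
    · rw [← h'', ell_self, asc_self, ell_of_lt (by omega), mul_one]
    have hac : a ≤ c + 1 := by omega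
    have hcom : Commute (gen n (c+2)) (ell n a c) :=
      commute_ell (fun m _ h2 => (gen_comm_s12 (show m + 2 ≤ c + 2 by omega)).symm)
    calc ell n a (c+1+1)
        = (asc n a (c+1) * ell n a c) * (gen n (c+2) * desc n (c+1) a) := by
          rw [ell_peel_top (by omega), desc_peel_top (by omega), ih (by omega)]
      _ = asc n a (c+1) * gen n (c+2) * (ell n a c * desc n (c+1) a) := by
          rw [mul_assoc (asc n a (c+1)), ← mul_assoc (ell n a c), hcom.symm.eq]; group
      _ = asc n a (c+1+1) * ell n a (c+1) := by
          conv_rhs => rw [asc_peel_top (show a ≤ c + 1 + 1 by omega),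
            ell_peel_top (show a ≤ c + 1 by omega)]

/-- Full-twist recursion: `ℓ_{a,b}² = ℓ_{a,b-1}² τ_{a,b}`. -/
lemma ellsq (n a b : ℕ) (ha : 1 ≤ a) (hb : b + 1 ≤ n) (hab : a ≤ b + 2) :
    ell n a (b+1) ^ 2 = ell n a b ^ 2 * (desc n (b+1) a * asc n a (b+1)) := by
  rcases Nat.eq_or_lt_of_le hab with h' | h'
  · rw [ell_of_lt (by omega), ell_of_lt (by omega), desc_of_lt (by omega),
      asc_of_lt (by omega)]
    simp
  have hab' : a ≤ b + 1 := by omega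
  have hcom : Commute (desc n (b+1) a * asc n a (b+1)) (ell n a b) :=
    commute_ell (fun m h1 h2 => tau_comm ha hb h1 (by omega))
  calc ell n a (b+1) ^ 2
      = (ell n a b * desc n (b+1) a) * (asc n a (b+1) * ell n a b) := by
        rw [pow_two]
        nth_rewrite 1 [ell_peel_top hab']
        nth_rewrite 1 [ell_eq_asc_mul n a ha b hb]
        rfl
    _ = ell n a b * ((desc n (b+1) a * asc n a (b+1)) * ell n a b) := by group
    _ = ell n a b ^ 2 * (desc n (b+1) a * asc n a (b+1)) := by
        rw [hcom.eq, pow_two]; group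

/-- The classical pure braid generator `σ_{i,j} = (s_{j-1} ⋯ s_{i+1}) s_i (s_{i+1}⁻¹ ⋯ s_{j-1}⁻¹)`. -/
def sigmaGen (n i j : ℕ) : BraidGroup n :=
  desc n (j - 1) (i + 1) * gen n i * (desc n (j - 1) (i + 1))⁻¹

/-- The classical pure braid generator `A_{i,j} = σ_{i,j}²`. -/
def AGen (n i j : ℕ) : BraidGroup n := (sigmaGen n i j) ^ 2

/-- `A_{i,j} = ℓ_{i,j-2}⁻² ⬝ ℓ_{i,j-1}² ⬝ ℓ_{i+1,j-2}² ⬝ ℓ_{i+1,j-1}⁻²` for `1 ≤ i < j ≤ n+1`,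
with the convention `ℓ_{a,b} = 1` when `b < a`. -/
theorem AGen_eq_ell_product (n i j : ℕ) (hi : 1 ≤ i) (hij : i < j) (hj : j ≤ n + 1) :
    AGen n i j =
      ((ell n i (j - 2)) ^ 2)⁻¹ * (ell n i (j - 1)) ^ 2 *
        (ell n (i + 1) (j - 2)) ^ 2 * ((ell n (i + 1) (j - 1)) ^ 2)⁻¹ := by
  obtain ⟨b, rfl⟩ : ∃ b, j = b + 2 := ⟨j - 2, by omega⟩
  unfold AGen sigmaGen
  rw [show b + 2 - 1 = b + 1 from by omega, show b + 2 - 2 = b from by omega]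
  have hib : i ≤ b + 1 := by omega
  have hbn : b + 1 ≤ n := by omega
  have hY := ellsq n i b hi hbn (by omega)
  have hW := ellsq n (i+1) b (by omega) hbn (by omega)
  set T := desc n (b+1) i * asc n i (b+1) with hT
  set T' := desc n (b+1) (i+1) * asc n (i+1) (b+1) with hT'
  set Z := ell n (i+1) b with hZ
  have hcom : Commute T' (Z ^ 2) :=
    (commute_ell (fun m h1 h2 => tau_comm (by omega) hbn h1 (by omega))).pow_right 2
  rw [hY, hW]
  have e2 : Z ^ 2 * (Z ^ 2 * T')⁻¹ = T'⁻¹ := by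
    rw [mul_inv_rev, ← mul_assoc, (hcom.inv_left.symm).eq]
    group
  calc (desc n (b+1) (i+1) * gen n i * (desc n (b+1) (i+1))⁻¹) ^ 2
      = T * T'⁻¹ := by
        rw [pow_two, hT, hT', desc_peel_bot hib, asc_peel_bot hib]
        group
    _ = (ell n i b ^ 2)⁻¹ * (ell n i b ^ 2 * T) * Z ^ 2 * (Z ^ 2 * T')⁻¹ := by
        rw [mul_assoc, mul_assoc, e2]
        simp only [mul_assoc, inv_mul_cancel_left, hT]
end BraidPaper
end
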